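/- arXiv:2603.14752 — 2 statements merged into one kernel-verified Lean document; each statement's English description precedes it below -/
import Mathlib

section
/- Let X_1, ..., X_{M+1} be exchangeable real-valued random variables (ties allowed). Then for every k ∈ {1, ..., M+1}, P(rank(X_{M+1}) ≤ k) ≤ k/(M+1), where rank(X_{M+1}) = #{i : X_i ≤ X_{M+1}}. That is, rank(X_{M+1}) is stochastically no smaller than a uniform random variable on {1, ..., M+1}. -/
open MeasureTheory

/-- rank of coordinate `j` in the vector `x`. -/
noncomputable def rnk (M : ℕ) (j : Fin (M + 1)) (x : Fin (M + 1) → ℝ) : ℕ :=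
  (Finset.univ.filter (fun i => x i ≤ x j)).card

lemma rnk_measurable (M : ℕ) (j : Fin (M + 1)) : Measurable (rnk M j) := by
  have h : rnk M j = fun x => ∑ i : Fin (M + 1), if x i ≤ x j then 1 else 0 := by
    funext x; simp only [rnk, Finset.card_filter]
  rw [h]
  exact Finset.measurable_sum _ fun i _ =>
    Measurable.ite (measurableSet_le (measurable_pi_apply i) (measurable_pi_apply j))
      measurable_const measurable_const

lemma card_rnk_le (M : ℕ) (x : Fin (M + 1) → ℝ) (k : ℕ) :
    (Finset.univ.filter (fun j => rnk M j x ≤ k)).card ≤ k := by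
  set S := Finset.univ.filter (fun j => rnk M j x ≤ k) with hS
  rcases S.eq_empty_or_nonempty with h | h
  · simp [h]
  · obtain ⟨j, hj, hmax⟩ := S.exists_max_image x h
    have hsub : S ⊆ Finset.univ.filter (fun i => x i ≤ x j) := by
      intro i hi
      simp only [Finset.mem_filter, Finset.mem_univ, true_and]
      exact hmax i hi
    calc S.card ≤ rnk M j x := Finset.card_le_card hsub
      _ ≤ k := (Finset.mem_filter.mp hj).2

lemma filter_perm_card {α : Type*} [Fintype α] [DecidableEq α] (σ : Equiv.Perm α)
    (p : α → Prop) [DecidablePred p] :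
    (Finset.univ.filter fun i => p (σ i)).card = (Finset.univ.filter p).card := by
  rw [show (Finset.univ.filter fun i => p (σ i)) =
        Finset.map σ.symm.toEmbedding (Finset.univ.filter p) by
      ext i; simp [Finset.mem_map_equiv]]
  exact Finset.card_map _

/-- For exchangeable real random variables `X 0, ..., X M` (ties allowed),
the rank of the last one is stochastically no smaller than uniform on `{1, ..., M+1}`:
`P(rank ≤ k) ≤ k/(M+1)` for every `k ∈ {1, ..., M+1}`. -/
theorem rank_stochastically_dominates_uniform
    {Ω : Type*} [MeasurableSpace Ω] (P : Measure Ω) [IsProbabilityMeasure P]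
    (M : ℕ) (X : Fin (M + 1) → Ω → ℝ) (hX : ∀ i, Measurable (X i))
    (hexch : ∀ σ : Equiv.Perm (Fin (M + 1)),
      Measure.map (fun ω => fun i => X (σ i) ω) P = Measure.map (fun ω => fun i => X i ω) P) :
    ∀ k ∈ Finset.Icc 1 (M + 1),
      P {ω | (Finset.univ.filter (fun i => X i ω ≤ X (Fin.last M) ω)).card ≤ k}
        ≤ k / (M + 1) := by
  intro k hk
  set Y : Ω → Fin (M + 1) → ℝ := fun ω i => X i ω with hYdef
  have hYm : Measurable Y := measurable_pi_lambda _ hX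
  -- the measurable target sets
  have hSmeas : ∀ j : Fin (M + 1),
      MeasurableSet {x : Fin (M + 1) → ℝ | rnk M j x ≤ k} :=
    fun j => (rnk_measurable M j) measurableSet_Iic
  set A : Fin (M + 1) → Set Ω := fun j => {ω | rnk M j (Y ω) ≤ k} with hAdef
  have hAm : ∀ j, MeasurableSet (A j) := fun j => hYm (hSmeas j)
  -- equal probabilities by exchangeability
  have hPeq : ∀ j : Fin (M + 1), P (A j) = P (A (Fin.last M)) := by
    intro j
    set σ : Equiv.Perm (Fin (M + 1)) := Equiv.swap j (Fin.last M) with hσ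
    set Yσ : Ω → Fin (M + 1) → ℝ := fun ω i => X (σ i) ω with hYσ
    have hYσm : Measurable Yσ := measurable_pi_lambda _ fun i => hX (σ i)
    have hmap := hexch σ
    have h1 : P (Yσ ⁻¹' {x | rnk M (Fin.last M) x ≤ k})
        = P (Y ⁻¹' {x | rnk M (Fin.last M) x ≤ k}) := by
      rw [← Measure.map_apply hYσm (hSmeas (Fin.last M)),
        ← Measure.map_apply hYm (hSmeas (Fin.last M)), hmap]
    have h2 : Yσ ⁻¹' {x | rnk M (Fin.last M) x ≤ k} = A j := by
      ext ω
      simp only [Set.mem_preimage, Set.mem_setOf_eq, hAdef, rnk]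
      have hσlast : σ (Fin.last M) = j := Equiv.swap_apply_right j (Fin.last M)
      have : (Finset.univ.filter fun i => Yσ ω i ≤ Yσ ω (Fin.last M)).card
          = (Finset.univ.filter fun i => Y ω i ≤ Y ω j).card := by
        have := filter_perm_card σ (fun i => Y ω i ≤ Y ω j)
        simpa [hYσ, hYdef, hσlast] using this
      rw [this]
    rw [← h2, h1]
    rfl
  -- sum of probabilities bounded by k
  have hsum : ∑ j : Fin (M + 1), P (A j) ≤ (k : ENNReal) := by
    have hind : ∀ j : Fin (M + 1),
        P (A j) = ∫⁻ ω, (A j).indicator (fun _ => (1 : ENNReal)) ω ∂P := by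
      intro j
      exact (lintegral_indicator_one (hAm j)).symm
    calc ∑ j : Fin (M + 1), P (A j)
        = ∑ j : Fin (M + 1), ∫⁻ ω, (A j).indicator (fun _ => (1 : ENNReal)) ω ∂P := by
          exact Finset.sum_congr rfl fun j _ => hind j
      _ = ∫⁻ ω, ∑ j : Fin (M + 1), (A j).indicator (fun _ => (1 : ENNReal)) ω ∂P := by
          rw [lintegral_finset_sum]
          exact fun j _ => (measurable_const.indicator (hAm j))
      _ ≤ ∫⁻ _, (k : ENNReal) ∂P := by
          apply lintegral_mono
          intro ω
          dsimp only
          have : ∑ j : Fin (M + 1), (A j).indicator (fun _ => (1 : ENNReal)) ω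
              = ((Finset.univ.filter fun j => rnk M j (Y ω) ≤ k).card : ENNReal) := by
            rw [Finset.card_filter]
            push_cast
            refine Finset.sum_congr rfl fun j _ => ?_
            by_cases hj : rnk M j (Y ω) ≤ k <;> simp [Set.indicator_apply, hAdef, hj]
          rw [this]
          exact_mod_cast Nat.cast_le.mpr (card_rnk_le M (Y ω) k)
      _ = (k : ENNReal) := by simp
  have hsum' : ((M : ENNReal) + 1) * P (A (Fin.last M)) ≤ (k : ENNReal) := by
    calc ((M : ENNReal) + 1) * P (A (Fin.last M))
        = ∑ _j : Fin (M + 1), P (A (Fin.last M)) := by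
          rw [Finset.sum_const, Finset.card_univ, Fintype.card_fin,
            nsmul_eq_mul, Nat.cast_add, Nat.cast_one]
      _ = ∑ j : Fin (M + 1), P (A j) := Finset.sum_congr rfl fun j _ => (hPeq j).symm
      _ ≤ (k : ENNReal) := hsum
  have hgoal : P (A (Fin.last M)) ≤ (k : ENNReal) / ((M : ENNReal) + 1) := by
    rw [ENNReal.le_div_iff_mul_le (Or.inl (by simp)) (Or.inl (by
      exact ENNReal.add_ne_top.mpr ⟨ENNReal.natCast_ne_top M, ENNReal.one_ne_top⟩))]
    rw [mul_comm]
    exact hsum'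
  exact hgoal
end

section
/- Let g : 𝕋 → 𝔽 be a function and π : 𝕋 × Ω → [0,1] a random contour satisfying validity at θ: P_θ(π(θ) ≤ α) ≤ α for all α ∈ [0,1]. Define the marginal contour π^g(φ) = sup_{ϑ : g(ϑ)=φ} π(ϑ) for φ ∈ g(𝕋). Then the marginal contour is valid at the true feature value Φ = g(θ): P_θ(π^g(g(θ)) ≤ α) ≤ α for all α ∈ [0,1]. -/
open MeasureTheory

/-- Marginalization validity. If the random contour `π` is valid at `θ`,
then the marginal contour `π^g(φ) = sup_{ϑ : g(ϑ) = φ} π(ϑ)` is valid at the true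
feature value `g(θ)`. -/
theorem marginal_validity
    {𝕋 𝔽 : Type*} {Ω : Type*} [MeasurableSpace Ω] (P : Measure Ω) [IsProbabilityMeasure P]
    (g : 𝕋 → 𝔽) (π : 𝕋 → Ω → ℝ)
    (h01 : ∀ ϑ ω, π ϑ ω ∈ Set.Icc (0 : ℝ) 1)
    (θ : 𝕋)
    (hvalid : ∀ α : ℝ, 0 ≤ α → α ≤ 1 → P {ω | π θ ω ≤ α} ≤ ENNReal.ofReal α) :
    ∀ α : ℝ, 0 ≤ α → α ≤ 1 →
      P {ω | sSup ((fun ϑ => π ϑ ω) '' {ϑ : 𝕋 | g ϑ = g θ}) ≤ α} ≤ ENNReal.ofReal α := by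
  intro α h0 h1
  refine le_trans (measure_mono fun ω hω => ?_) (hvalid α h0 h1)
  have hmem : θ ∈ {ϑ : 𝕋 | g ϑ = g θ} := rfl
  refine le_trans (le_csSup ⟨1, ?_⟩ (Set.mem_image_of_mem (fun ϑ => π ϑ ω) hmem)) hω
  rintro x ⟨ϑ, -, rfl⟩
  exact (h01 ϑ ω).2
end
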